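/- Let p : ℝ → ℂ be 1-periodic and differentiable with ‖p'‖_∞ ≤ 2π k0, and let h be a good(δ̄, N_δ̄) bijection. Then there is an absolute constant C such that for every i with |i − h(i)| ≤ δ̄: E[ |p(t_{h(i)}) − p(t_i)|² ] ≤ C·( k0²/N + δ̄²·k0²/N² ). -/

import Mathlib

open MeasureTheory ProbabilityTheory Finset

noncomputable section

/-- `t` is the vector of order statistics of `N` i.i.d. samples from the uniform
distribution on the interval `[0, b]`: there exist i.i.d. random variables `u i`,
each uniformly distributed on `[0, b]`, such that for every `ω` the vector
`(t i ω)_i` is the monotone rearrangement of `(u i ω)_i`. -/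
def IsUniformOrderStats {Ω : Type*} [MeasurableSpace Ω] (μ : Measure Ω) (b : ℝ)
    {N : ℕ} (t : Fin N → Ω → ℝ) : Prop :=
  ∃ u : Fin N → Ω → ℝ,
    (∀ i, Measurable (u i)) ∧
    iIndepFun u μ ∧
    (∀ i, Measure.map (u i) μ = (ENNReal.ofReal b)⁻¹ • volume.restrict (Set.Icc 0 b)) ∧
    ∀ ω, Monotone (fun i => t i ω) ∧ ∃ σ : Equiv.Perm (Fin N), ∀ i, t i ω = u (σ i) ω

/-- A permutation `h` of `{1, …, N}` is `good(δ, Nδ)` if at most `Nδ` indices are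
moved by more than `δ`. -/
def GoodPerm {N : ℕ} (δ Nδ : ℕ) (h : Equiv.Perm (Fin N)) : Prop :=
  (Finset.univ.filter fun i : Fin N => (δ : ℤ) < |(i.1 : ℤ) - ((h i).1 : ℤ)|).card ≤ Nδ

/-!
By the derivative bound, `p` is `2πk0`-Lipschitz, so it suffices to control the gap
`t_j - t_i` of two order statistics with `d = j - i > 0`. A gap longer than `2w` contains a
whole cell of the grid of mesh `w` in `[0, 1]`, and that cell then holds at most `d - 1` of the
`N` samples. A Chernoff bound (the moment generating function of the count at `-log 2`) makes
this happen with probability at most `2^(d-1) e^(-Nw/2)` per cell. Choosing `Nw/2 = d + 2 log N`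
(so that `2w = gapThreshold d N`), the union over the `⌊1/w⌋` cells has probability at most
`1/(2N)`, whence
`E[(t_j - t_i)²] ≤ (2w)² + 1/(2N) = O(d²/N² + 1/N)`, using `log² N ≤ 4N`.
-/

open Real Set
open scoped NNReal

theorem exists_grid_Ioo_subset_Ioo {w x y : ℝ} (hw : 0 < w) (hx : 0 ≤ x) (hy : y ≤ 1)
    (hxy : 2 * w < y - x) :
    ∃ m < ⌊w⁻¹⌋₊, Ioo (m * w) ((m + 1) * w) ⊆ Ioo x y := by
  obtain ⟨hm_ge, hm_lt⟩ : x / w ≤ ⌈x / w⌉₊ ∧ (⌈x / w⌉₊ : ℝ) < x / w + 1 :=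
    ⟨Nat.le_ceil _, Nat.ceil_lt_add_one (div_nonneg hx hw.le)⟩
  rw [div_le_iff₀ hw] at hm_ge
  have hm_lt' : (⌈x / w⌉₊ + 1) * w < y := by
    have := (mul_lt_mul_iff_left₀ hw).2 hm_lt
    rw [add_mul, div_mul_cancel₀ _ hw.ne', one_mul] at this
    linarith
  refine ⟨⌈x / w⌉₊, ?_, Ioo_subset_Ioo hm_ge hm_lt'.le⟩
  rw [← Nat.add_one_le_iff, Nat.le_floor_iff (by positivity), ← one_div, le_div_iff₀ hw]
  push_cast
  linarith

theorem card_mem_le_of_subset_Ioo {N : ℕ} {u t : Fin N → ℝ} (ht : Monotone t)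
    {σ : Equiv.Perm (Fin N)} (htu : ∀ k, t k = u (σ k)) {S : Set ℝ} [DecidablePred (· ∈ S)]
    {i j : Fin N} (hS : S ⊆ Ioo (t i) (t j)) :
    #{k | u k ∈ S} ≤ (j : ℕ) - i - 1 := by
  have hcard : #{k | u k ∈ S} = #{k | t k ∈ S} :=
    card_equiv σ.symm fun k => by simp [htu]
  rw [hcard, ← Fin.card_Ioo]
  refine card_le_card fun k hk => ?_
  obtain ⟨hik, hkj⟩ := hS (mem_filter.1 hk).2
  exact mem_Ioo.2 ⟨ht.reflect_lt hik, ht.reflect_lt hkj⟩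

theorem two_pow_pred_mul_exp_neg_le_one (d : ℕ) : (2 : ℝ) ^ (d - 1) * exp (-d) ≤ 1 := by
  calc (2 : ℝ) ^ (d - 1) * exp (-d) ≤ exp 1 ^ d * exp (-d) := by
        gcongr
        calc (2 : ℝ) ^ (d - 1) ≤ 2 ^ d := pow_le_pow_right₀ one_le_two (Nat.sub_le d 1)
          _ ≤ exp 1 ^ d := by gcongr; linarith [add_one_le_exp 1]
    _ = 1 := by rw [exp_one_pow, ← exp_add, add_neg_cancel, exp_zero]

theorem log_sq_le_four_mul {x : ℝ} (hx : 1 ≤ x) : log x ^ 2 ≤ 4 * x := by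
  have hsqrt : log x ≤ 2 * √x := by
    have := log_le_sub_one_of_pos (sqrt_pos.2 (by linarith : 0 < x))
    rw [log_sqrt (by linarith)] at this
    linarith
  calc log x ^ 2 ≤ (2 * √x) ^ 2 := pow_le_pow_left₀ (log_nonneg hx) hsqrt 2
    _ = 4 * x := by rw [mul_pow, sq_sqrt (by linarith)]; ring

def gapThreshold (d N : ℕ) : ℝ := 4 * (d + 2 * log N) / N

theorem gapThreshold_sq_add_le (d : ℕ) {N : ℕ} (hN : 1 ≤ N) :
    gapThreshold d N ^ 2 + 1 / (2 * N) ≤ 513 * (1 / N + d ^ 2 / N ^ 2) := by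
  have hN' : (1 : ℝ) ≤ N := by exact_mod_cast hN
  have hsq : ((d : ℝ) + 2 * log N) ^ 2 ≤ 2 * d ^ 2 + 32 * N := by
    nlinarith [sq_nonneg ((d : ℝ) - 2 * log N), log_sq_le_four_mul hN']
  have h_inv : (0 : ℝ) ≤ 1 / N := by positivity
  have h_sq : (0 : ℝ) ≤ d ^ 2 / N ^ 2 := by positivity
  calc gapThreshold d N ^ 2 + 1 / (2 * N)
      = 16 * ((d : ℝ) + 2 * log N) ^ 2 / N ^ 2 + 1 / (2 * (N : ℝ)) := by rw [gapThreshold]; ring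
    _ ≤ 16 * (2 * d ^ 2 + 32 * N) / N ^ 2 + 1 / (2 * (N : ℝ)) := by gcongr
    _ = 32 * ((d : ℝ) ^ 2 / N ^ 2) + 1025 / 2 * (1 / (N : ℝ)) := by field_simp; ring
    _ ≤ 513 * (1 / N + d ^ 2 / N ^ 2) := by linarith

section

variable {Ω : Type*} [MeasurableSpace Ω] {μ : Measure Ω}

theorem measureReal_card_mem_le_le {ι α : Type*} [Fintype ι] [MeasurableSpace α]
    [IsProbabilityMeasure μ] {u : ι → Ω → α} (hu : ∀ k, Measurable (u k))
    (hind : iIndepFun u μ) {S : Set α} [DecidablePred (· ∈ S)] (hS : MeasurableSet S) {q : ℝ}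
    (hq : ∀ k, q ≤ μ.real (u k ⁻¹' S)) (r : ℕ) :
    μ.real {ω | #{k | u k ω ∈ S} ≤ r} ≤ 2 ^ r * exp (-(q * Fintype.card ι / 2)) := by
  set X : ι → Ω → ℝ := fun k ω => S.indicator 1 (u k ω)
  have hX : ∀ k, Measurable (X k) := fun k => (measurable_one.indicator hS).comp (hu k)
  have hsum : ∀ ω, (#{k | u k ω ∈ S} : ℝ) = (∑ k, X k) ω := by
    intro ω
    simp [X, Set.indicator_apply, Finset.sum_apply]
  have hexp : ∀ k ω,
      exp (-log 2 * X k ω) = 1 - (u k ⁻¹' S).indicator (fun _ => 1 / 2) ω := by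
    intro k ω
    by_cases h : u k ω ∈ S
    · norm_num [X, h, exp_neg, exp_log]
    · simp [X, h]
  have hmgf : ∀ k, mgf (X k) μ (-log 2) ≤ exp (-(q / 2)) := by
    intro k
    calc mgf (X k) μ (-log 2) = 1 - μ.real (u k ⁻¹' S) / 2 := by
          simp only [mgf, hexp]
          rw [integral_sub (integrable_const 1) ((integrable_const _).indicator (hu k hS)),
            integral_indicator_const _ (hu k hS)]
          simp [div_eq_mul_inv]
      _ ≤ 1 - q / 2 := by linarith [hq k]
      _ ≤ exp (-(q / 2)) := by linarith [add_one_le_exp (-(q / 2))]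
  have hint : Integrable (fun ω => exp (-log 2 * (∑ k, X k) ω)) μ := by
    refine .of_bound (by fun_prop) 1 (ae_of_all _ fun ω => ?_)
    rw [norm_of_nonneg (exp_nonneg _), exp_le_one_iff, ← hsum]
    exact mul_nonpos_of_nonpos_of_nonneg (neg_nonpos.2 (log_nonneg one_le_two)) (by positivity)
  calc μ.real {ω | #{k | u k ω ∈ S} ≤ r} = μ.real {ω | (∑ k, X k) ω ≤ r} := by
        simp_rw [← hsum, Nat.cast_le]
    _ ≤ exp (- -log 2 * r) * mgf (∑ k, X k) μ (-log 2) :=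
        measure_le_le_exp_mul_mgf _ (neg_nonpos.2 (log_nonneg one_le_two)) hint
    _ = 2 ^ r * ∏ k, mgf (X k) μ (-log 2) := by
        have hindX : iIndepFun X μ := hind.comp _ fun _ => measurable_one.indicator hS
        rw [hindX.mgf_sum hX, neg_neg, exp_mul, exp_log two_pos, rpow_natCast]
    _ ≤ 2 ^ r * ∏ _k : ι, exp (-(q / 2)) := by
        gcongr with k
        · exact fun k _ => mgf_nonneg
        · exact hmgf k
    _ = 2 ^ r * exp (-(q * Fintype.card ι / 2)) := by
        rw [prod_const, ← exp_nat_mul, card_univ]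
        ring_nf

theorem measureReal_preimage_Ioo_of_map_eq {X : Ω → ℝ} (hX : Measurable X)
    (hlaw : μ.map X = volume.restrict (Icc 0 1)) {a b : ℝ} (ha : 0 ≤ a) (hab : a ≤ b)
    (hb : b ≤ 1) :
    μ.real (X ⁻¹' Ioo a b) = b - a := by
  rw [← map_measureReal_apply hX measurableSet_Ioo, hlaw,
    measureReal_restrict_apply measurableSet_Ioo,
    inter_eq_left.2 (Ioo_subset_Icc_self.trans (Icc_subset_Icc ha hb)),
    Real.volume_real_Ioo_of_le hab]

theorem integral_le_add_mul_measureReal_lt [IsProbabilityMeasure μ] {f : Ω → ℝ} {b M : ℝ}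
    (hb : 0 ≤ b) (hf : 0 ≤ᵐ[μ] f) (hfM : ∀ᵐ ω ∂μ, f ω ≤ M) :
    ∫ ω, f ω ∂μ ≤ b + M * μ.real {ω | b < f ω} := by
  -- `f` need not be measurable: pass to a measurable hull of the exceptional set
  set U := toMeasurable μ {ω | b < f ω}
  have hU : MeasurableSet U := measurableSet_toMeasurable _ _
  have hUint : Integrable (U.indicator fun _ => M) μ := (integrable_const M).indicator hU
  calc ∫ ω, f ω ∂μ ≤ ∫ ω, (b + U.indicator (fun _ => M) ω) ∂μ := by
        refine integral_mono_of_nonneg hf ((integrable_const b).add hUint) ?_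
        filter_upwards [hfM] with ω hω
        by_cases hωU : ω ∈ U
        · rw [indicator_of_mem hωU]
          linarith
        · rw [indicator_of_notMem hωU, add_zero]
          exact not_lt.1 fun h => hωU (subset_toMeasurable _ _ h)
    _ = b + M * μ.real {ω | b < f ω} := by
        rw [integral_add (integrable_const b) hUint, integral_indicator_const _ hU,
          measureReal_def, measure_toMeasurable, ← measureReal_def]
        simp [mul_comm]

namespace IsUniformOrderStats

variable {N : ℕ} {t : Fin N → Ω → ℝ}

theorem ae_mem_Icc {b : ℝ} (ht : IsUniformOrderStats μ b t) :
    ∀ᵐ ω ∂μ, ∀ k, t k ω ∈ Icc 0 b := by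
  obtain ⟨u, hu, -, hlaw, hsort⟩ := ht
  have hu_mem : ∀ᵐ ω ∂μ, ∀ k, u k ω ∈ Icc 0 b := ae_all_iff.2 fun k =>
    ae_of_ae_map (hu k).aemeasurable <| by
      rw [hlaw]
      exact Measure.ae_smul_measure (ae_restrict_mem measurableSet_Icc) _
  filter_upwards [hu_mem] with ω hω k
  obtain ⟨-, σ, hσ⟩ := hsort ω
  exact hσ k ▸ hω (σ k)

theorem monotone {b : ℝ} (ht : IsUniformOrderStats μ b t) (ω : Ω) :
    Monotone fun k => t k ω :=
  let ⟨_, _, _, _, hsort⟩ := ht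
  (hsort ω).1

theorem measureReal_two_mul_lt_sub_le [IsProbabilityMeasure μ] (ht : IsUniformOrderStats μ 1 t)
    (i j : Fin N) {w : ℝ} (hw : 0 < w) :
    μ.real {ω | 2 * w < t j ω - t i ω}
      ≤ ⌊w⁻¹⌋₊ * (2 ^ ((j : ℕ) - i - 1) * exp (-(w * N / 2))) := by
  have ht_mem := ht.ae_mem_Icc
  obtain ⟨u, hu, hind, hlaw, hsort⟩ := ht
  simp only [ENNReal.ofReal_one, inv_one, one_smul] at hlaw
  set cell : ℕ → Set ℝ := fun m => Ioo (m * w) ((m + 1) * w)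
  set E : ℕ → Set Ω := fun m => {ω | #{k | u k ω ∈ cell m} ≤ (j : ℕ) - i - 1}
  have hcover : {ω | 2 * w < t j ω - t i ω} ≤ᵐ[μ] ⋃ m ∈ range ⌊w⁻¹⌋₊, E m := by
    filter_upwards [ht_mem] with ω hω hgap
    obtain ⟨hmono, σ, hσ⟩ := hsort ω
    obtain ⟨m, hm, hsub⟩ := exists_grid_Ioo_subset_Ioo hw (hω i).1 (hω j).2 hgap
    exact mem_biUnion (mem_range.2 hm) (card_mem_le_of_subset_Ioo hmono hσ hsub)
  have hE : ∀ m ∈ range ⌊w⁻¹⌋₊,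
      μ.real (E m) ≤ 2 ^ ((j : ℕ) - i - 1) * exp (-(w * N / 2)) := by
    intro m hm
    have hm1 : (m + 1) * w ≤ 1 := by
      have := (Nat.le_floor_iff (inv_nonneg.2 hw.le)).1 (mem_range.1 hm)
      rw [← one_div, le_div_iff₀ hw] at this
      exact_mod_cast this
    have hq : ∀ k, w ≤ μ.real (u k ⁻¹' cell m) := fun k => by
      rw [measureReal_preimage_Ioo_of_map_eq (hu k) (hlaw k) (by positivity) (by nlinarith) hm1]
      linarith
    simpa only [Fintype.card_fin] using
      measureReal_card_mem_le_le hu hind measurableSet_Ioo hq ((j : ℕ) - i - 1)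
  calc μ.real {ω | 2 * w < t j ω - t i ω}
      ≤ μ.real (⋃ m ∈ range ⌊w⁻¹⌋₊, E m) :=
        ENNReal.toReal_mono (measure_ne_top _ _) (measure_mono_ae hcover)
    _ ≤ ∑ m ∈ range ⌊w⁻¹⌋₊, μ.real (E m) := measureReal_biUnion_finset_le _ _
    _ ≤ ⌊w⁻¹⌋₊ * (2 ^ ((j : ℕ) - i - 1) * exp (-(w * N / 2))) := by
      simpa using sum_le_card_nsmul _ _ _ hE

theorem measureReal_gapThreshold_lt_sub_le [IsProbabilityMeasure μ]
    (ht : IsUniformOrderStats μ 1 t) {i j : Fin N} (hij : i < j) :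
    μ.real {ω | gapThreshold ((j : ℕ) - i) N < t j ω - t i ω} ≤ 1 / (2 * N) := by
  set d : ℕ := (j : ℕ) - i
  have hd : (1 : ℝ) ≤ d := by exact_mod_cast Nat.sub_pos_of_lt hij
  have hN : (1 : ℝ) ≤ N := by exact_mod_cast (Nat.zero_lt_of_lt j.2)
  have hlog : 0 ≤ log N := log_nonneg hN
  set w : ℝ := 2 * (d + 2 * log N) / N
  have hw : 0 < w := by positivity
  have hwN : w * N / 2 = d + 2 * log N := by simp only [w]; field_simp
  have hfloor : (⌊w⁻¹⌋₊ : ℝ) ≤ N / 2 := by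
    refine (Nat.floor_le (inv_nonneg.2 hw.le)).trans ?_
    rw [inv_div]
    exact div_le_div_of_nonneg_left (by positivity) two_pos (by linarith)
  have hexp : 2 ^ (d - 1) * exp (-(w * N / 2)) ≤ 1 / N ^ 2 := by
    have hN2 : exp (-(2 * log N)) = 1 / N ^ 2 := by
      rw [exp_neg, two_mul, exp_add, exp_log (by positivity), one_div, sq]
    rw [hwN, neg_add, exp_add, hN2, ← mul_assoc]
    exact mul_le_of_le_one_left (by positivity) (two_pow_pred_mul_exp_neg_le_one d)
  calc μ.real {ω | gapThreshold d N < t j ω - t i ω}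
      = μ.real {ω | 2 * w < t j ω - t i ω} := by simp only [gapThreshold, w]; ring_nf
    _ ≤ ⌊w⁻¹⌋₊ * (2 ^ (d - 1) * exp (-(w * N / 2))) :=
        ht.measureReal_two_mul_lt_sub_le i j hw
    _ ≤ N / 2 * (1 / N ^ 2) := by gcongr
    _ = 1 / (2 * N) := by field_simp

theorem integral_norm_sub_sq_le [IsProbabilityMeasure μ] (ht : IsUniformOrderStats μ 1 t)
    {E : Type*} [SeminormedAddCommGroup E] {p : ℝ → E} {K : ℝ≥0} (hp : LipschitzWith K p)
    (i j : Fin N) :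
    ∫ ω, ‖p (t j ω) - p (t i ω)‖ ^ 2 ∂μ
      ≤ 513 * K ^ 2 * (1 / N + ((j : ℝ) - i) ^ 2 / N ^ 2) := by
  wlog hij : i ≤ j generalizing i j
  · simpa only [norm_sub_rev, ← neg_sub (j : ℝ), neg_sq] using this j i (le_of_not_ge hij)
  rcases hij.eq_or_lt with rfl | hij
  · simp only [sub_self, norm_zero, ne_eq, OfNat.ofNat_ne_zero, not_false_eq_true, zero_pow,
      integral_zero]
    positivity
  set d : ℕ := (j : ℕ) - i
  have hd : (j : ℝ) - i = d := by simp [d, Nat.cast_sub hij.le]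
  set s : ℝ := gapThreshold d N
  set f : Ω → ℝ := fun ω => ‖p (t j ω) - p (t i ω)‖ ^ 2
  have hgap : ∀ ω, 0 ≤ t j ω - t i ω := fun ω => sub_nonneg.2 (ht.monotone ω hij.le)
  have hf : ∀ ω, f ω ≤ K ^ 2 * (t j ω - t i ω) ^ 2 := by
    intro ω
    have := hp.norm_sub_le (t j ω) (t i ω)
    rw [Real.norm_of_nonneg (hgap ω)] at this
    simpa only [f, mul_pow] using pow_le_pow_left₀ (norm_nonneg _) this 2
  have hf_le : ∀ᵐ ω ∂μ, f ω ≤ K ^ 2 := by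
    filter_upwards [ht.ae_mem_Icc] with ω hω
    have hgap_le : t j ω - t i ω ≤ 1 := by linarith [(hω j).2, (hω i).1]
    calc f ω ≤ K ^ 2 * (t j ω - t i ω) ^ 2 := hf ω
      _ ≤ K ^ 2 := mul_le_of_le_one_right (by positivity) (pow_le_one₀ (hgap ω) hgap_le)
  have hf_lt : {ω | K ^ 2 * s ^ 2 < f ω} ⊆ {ω | s < t j ω - t i ω} := by
    intro ω (hω : K ^ 2 * s ^ 2 < f ω)
    show s < t j ω - t i ω
    by_contra! hle
    have : f ω ≤ K ^ 2 * s ^ 2 := (hf ω).trans (by gcongr; exact hgap ω)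
    linarith
  calc ∫ ω, f ω ∂μ ≤ K ^ 2 * s ^ 2 + K ^ 2 * μ.real {ω | K ^ 2 * s ^ 2 < f ω} :=
        integral_le_add_mul_measureReal_lt (by positivity) (ae_of_all _ fun _ => by positivity)
          hf_le
    _ ≤ K ^ 2 * (s ^ 2 + 1 / (2 * N)) := by
        rw [mul_add]
        gcongr
        exact (measureReal_mono hf_lt).trans (ht.measureReal_gapThreshold_lt_sub_le hij)
    _ ≤ K ^ 2 * (513 * (1 / N + d ^ 2 / N ^ 2)) := by
        gcongr
        exact gapThreshold_sq_add_le d (Nat.zero_lt_of_lt j.2)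
    _ = 513 * K ^ 2 * (1 / N + ((j : ℝ) - i) ^ 2 / N ^ 2) := by rw [hd]; ring

end IsUniformOrderStats

end

/-- There is an absolute constant `C` such that, for any 1-periodic
differentiable `p` with `‖p'‖_∞ ≤ 2π k0` and any `good(δ̄, N_δ̄)` permutation `h`, for
every `i` with `|i − h(i)| ≤ δ̄`:
`E[|p(t_{h(i)}) − p(t_i)|²] ≤ C (k0²/N + δ̄² k0²/N²)`. -/
theorem misordering_smooth_bound :
    ∃ C : ℝ, ∀ (p : ℝ → ℂ) (k0 N : ℕ) (δ Nδ : ℕ) (Ω : Type) [MeasurableSpace Ω]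
      (μ : Measure Ω) [IsProbabilityMeasure μ] (t : Fin N → Ω → ℝ)
      (h : Equiv.Perm (Fin N)) (i : Fin N),
      Function.Periodic p 1 →
      Differentiable ℝ p →
      (∀ x : ℝ, ‖deriv p x‖ ≤ 2 * Real.pi * k0) →
      IsUniformOrderStats μ 1 t →
      GoodPerm δ Nδ h →
      |(i.1 : ℤ) - ((h i).1 : ℤ)| ≤ (δ : ℤ) →
      (∫ ω, ‖p (t (h i) ω) - p (t i ω)‖ ^ 2 ∂μ)
        ≤ C * ((k0 : ℝ) ^ 2 / N + (δ : ℝ) ^ 2 * (k0 : ℝ) ^ 2 / (N : ℝ) ^ 2) := by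
  refine ⟨513 * (2 * π) ^ 2, fun p k0 N δ Nδ Ω _ μ _ t h i _ hdiff hderiv ht _ hδ => ?_⟩
  set K : ℝ≥0 := ⟨2 * π * k0, by positivity⟩
  have hp : LipschitzWith K p := lipschitzWith_of_nnnorm_deriv_le hdiff fun x => hderiv x
  have hshift : ((h i : ℝ) - i) ^ 2 ≤ δ ^ 2 := by
    rw [← sq_abs, abs_sub_comm]
    gcongr
    exact_mod_cast hδ
  calc ∫ ω, ‖p (t (h i) ω) - p (t i ω)‖ ^ 2 ∂μ
      ≤ 513 * K ^ 2 * (1 / N + ((h i : ℝ) - i) ^ 2 / N ^ 2) :=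
        ht.integral_norm_sub_sq_le hp i (h i)
    _ ≤ 513 * K ^ 2 * (1 / N + δ ^ 2 / N ^ 2) := by gcongr
    _ = _ := by
        rw [show (K : ℝ) = 2 * π * k0 from rfl]
        ring
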